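/- arXiv:1808.05609 — 2 statements merged into one kernel-verified Lean document; each statement's English description precedes it below -/
import Mathlib

section
/- If S ⊆ ℤ is a set of rigidity for a nontrivial weak mixing measure preserving system (X,μ,T) and m ∈ ℤ \ {0}, then the translate S + m is not a set of strong recurrence for weak mixing systems. -/
/-- A measure preserving system: a probability space `(X, μ)` together with an
invertible measure preserving transformation `T : X → X`. -/
structure MPSystem where
  X : Type
  [mX : MeasurableSpace X]
  μ : MeasureTheory.Measure X
  prob : MeasureTheory.IsProbabilityMeasure μ
  T : X ≃ᵐ X
  mp : MeasureTheory.MeasurePreserving T μ μ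

attribute [instance] MPSystem.mX

open MeasureTheory Filter

namespace MPSystem

/-- The `n`-th iterate `Tⁿ` of the transformation, for `n : ℤ`. -/
def iter (𝒮 : MPSystem) (n : ℤ) : 𝒮.X → 𝒮.X :=
  fun x => ((𝒮.T.toEquiv : Equiv.Perm 𝒮.X) ^ n) x

/-- The system is ergodic: every measurable `D` with `μ(D △ T⁻¹D) = 0` has measure `0` or `1`. -/
def IsErgodic (𝒮 : MPSystem) : Prop :=
  ∀ D : Set 𝒮.X, MeasurableSet D → 𝒮.μ (symmDiff D (𝒮.T ⁻¹' D)) = 0 →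
    𝒮.μ D = 0 ∨ 𝒮.μ D = 1

/-- The product system `(X × X, μ × μ, T × T)`. -/
noncomputable def prod (𝒮 : MPSystem) : MPSystem where
  X := 𝒮.X × 𝒮.X
  μ := 𝒮.μ.prod 𝒮.μ
  prob := by have := 𝒮.prob; infer_instance
  T := 𝒮.T.prodCongr 𝒮.T
  mp := by have := 𝒮.prob; exact 𝒮.mp.prod 𝒮.mp

/-- The system is weak mixing: the product system `(X×X, μ×μ, T×T)` is ergodic. -/
def WeakMixing (𝒮 : MPSystem) : Prop := 𝒮.prod.IsErgodic

/-- The system is nontrivial: some measurable `D` has `μ(D △ T⁻¹D) > 0`. -/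
def Nontrivial (𝒮 : MPSystem) : Prop :=
  ∃ D : Set 𝒮.X, MeasurableSet D ∧ 0 < 𝒮.μ (symmDiff D (𝒮.T ⁻¹' D))

end MPSystem

/-- `S ⊆ ℤ` is a set of recurrence: for every measure preserving system and every
measurable `D` with `μ(D) > 0`, there is `n ∈ S` with `μ(D ∩ TⁿD) > 0`. -/
def IsRecurrenceSet (S : Set ℤ) : Prop :=
  ∀ (𝒮 : MPSystem) (D : Set 𝒮.X), MeasurableSet D → 0 < 𝒮.μ D →
    ∃ n ∈ S, 0 < 𝒮.μ (D ∩ 𝒮.iter n '' D)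

/-- `S ⊆ ℤ` is measure expanding: every translate `S + m` is a set of recurrence. -/
def MeasureExpanding (S : Set ℤ) : Prop :=
  ∀ m : ℤ, IsRecurrenceSet ((fun s => s + m) '' S)

/-- `S` is a set of `δ`-recurrence: for every measure preserving system and every
measurable `D` with `μ(D) > δ`, there is `n ∈ S` with `μ(D ∩ TⁿD) > 0`. -/
def IsDeltaRecurrenceSet (δ : ℝ) (S : Set ℤ) : Prop :=
  ∀ (𝒮 : MPSystem) (D : Set 𝒮.X), MeasurableSet D → ENNReal.ofReal δ < 𝒮.μ D →
    ∃ n ∈ S, 0 < 𝒮.μ (D ∩ 𝒮.iter n '' D)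

/-- `S` (an infinite set) is a set of rigidity for the system `𝒮`:
for every measurable `D` and every `ε > 0`, `{n ∈ S : μ(D △ TⁿD) > ε}` is finite. -/
def IsRigiditySetFor (S : Set ℤ) (𝒮 : MPSystem) : Prop :=
  S.Infinite ∧ ∀ D : Set 𝒮.X, MeasurableSet D → ∀ ε : ℝ, 0 < ε →
    {n ∈ S | ENNReal.ofReal ε < 𝒮.μ (symmDiff D (𝒮.iter n '' D))}.Finite

/-- `S` is a set of strong recurrence. -/
def IsStrongRecurrenceSet (S : Set ℤ) : Prop :=
  ∀ (𝒮 : MPSystem) (D : Set 𝒮.X), MeasurableSet D → 0 < 𝒮.μ D →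
    ∃ c : ℝ, 0 < c ∧ {n ∈ S | ENNReal.ofReal c < 𝒮.μ (D ∩ 𝒮.iter n '' D)}.Infinite

/-- `S` is a set of strong recurrence for weak mixing systems. -/
def IsStrongRecurrenceSetForWeakMixing (S : Set ℤ) : Prop :=
  ∀ (𝒮 : MPSystem), 𝒮.WeakMixing → ∀ (D : Set 𝒮.X), MeasurableSet D → 0 < 𝒮.μ D →
    ∃ c : ℝ, 0 < c ∧ {n ∈ S | ENNReal.ofReal c < 𝒮.μ (D ∩ 𝒮.iter n '' D)}.Infinite

/-- The circle group `𝕋 = ℝ/ℤ`. -/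
abbrev 𝕋 : Type := UnitAddCircle

/-- The character `e : 𝕋 → S¹ ⊆ ℂ`, `e(x) = exp(2πi x̃)` where `x̃` is a real
representative of `x`. -/
noncomputable def e (x : 𝕋) : ℂ := (AddCircle.toCircle x : ℂ)

/-- A tuple `α ∈ 𝕋^d` is independent if the only integer solution of
`n₁α₁ + ⋯ + n_dα_d = 0` is `n₁ = ⋯ = n_d = 0`. -/
def IndepTuple {d : ℕ} (α : Fin d → 𝕋) : Prop :=
  ∀ n : Fin d → ℤ, (∑ j, n j • α j) = 0 → ∀ j, n j = 0

/-- The Bohr set `Bohr(α, η) = {n ∈ ℤ : max_j ‖nαⱼ‖ < η}`. -/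
def BohrSet {d : ℕ} (α : Fin d → 𝕋) (η : ℝ) : Set ℤ :=
  {n : ℤ | ∀ j, ‖n • α j‖ < η}

/-- The Bohr–Hamming neighborhood `BH(α; ε, η) = {n ∈ ℤ : #{j : ‖nαⱼ‖ < ε} ≥ (1-η)d}`. -/
def BHNbhd {d : ℕ} (α : Fin d → 𝕋) (ε η : ℝ) : Set ℤ :=
  {n : ℤ | (1 - η) * d ≤ ({j : Fin d | ‖n • α j‖ < ε}.ncard : ℝ)}

/-- The upper Banach density of `A ⊆ ℤ`:
`d*(A) = lim_k sup_n |A ∩ {n+1,…,n+k}|/k` (realized as a `limsup`). -/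
noncomputable def upperBanachDensity (A : Set ℤ) : ℝ :=
  Filter.limsup
    (fun k : ℕ => ⨆ n : ℤ, ((A ∩ Set.Icc (n + 1) (n + k)).ncard : ℝ) / k) Filter.atTop

/-! If some power `Tᵐ`, `m ≠ 0`, acted trivially on the measure algebra, the itinerary
`k ↦ [Tᵏx ∈ D]` of a.e. point would be `|m|`-periodic and hence take only finitely many values.
The pairs with equal itineraries then form an exactly `T × T`-invariant set of positive measure,
which weak mixing makes conull; this forces `μ D ∈ {0, 1}` for every `D`, against nontriviality.
So there is `D` with `μ D > 0` and `D ∩ TᵐD = ∅`, and then `μ (D ∩ T^(s+m) D) ≤ μ (E ∆ TˢE)` with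
`E = TᵐD`; rigidity makes the right side small for all but finitely many `s ∈ S`. -/

attribute [instance] MPSystem.prob

open Set
open scoped symmDiff

theorem measure_prod_setOf_eq_ne_zero {α β : Type*} [MeasurableSpace α] {μ : Measure α}
    [SFinite μ] [NeZero μ] {f g : α → β} (hfg : f =ᵐ[μ] g) (hg : (range g).Countable) :
    μ.prod μ {p | f p.1 = f p.2} ≠ 0 := by
  obtain ⟨b, -, hb⟩ : ∃ b ∈ range g, μ (g ⁻¹' {b}) ≠ 0 := by
    by_contra! h
    refine NeZero.ne μ (Measure.measure_univ_eq_zero.1 (measure_mono_null ?_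
      ((measure_biUnion_null_iff hg).2 h)))
    exact fun x _ => mem_biUnion (mem_range_self x) rfl
  set A := g ⁻¹' {b} ∩ {x | f x = g x}
  have hA : μ A ≠ 0 := by rwa [measure_inter_conull (t := {x | f x = g x}) (ae_iff.1 hfg)]
  have hAA : A ×ˢ A ⊆ {p | f p.1 = f p.2} := by
    rintro ⟨x, y⟩ ⟨⟨hx, hfx⟩, ⟨hy, hfy⟩⟩
    simp_all
  intro h0
  apply mul_ne_zero hA hA
  rw [← Measure.prod_prod]
  exact measure_mono_null hAA h0

namespace MPSystem

variable (𝒮 : MPSystem)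

theorem iter_add (a b : ℤ) : 𝒮.iter (a + b) = 𝒮.iter a ∘ 𝒮.iter b := by
  ext x
  simp only [iter, zpow_add, Equiv.Perm.mul_apply, Function.comp_apply]

theorem iter_zero : 𝒮.iter 0 = id := by
  ext x
  simp [iter]

theorem iter_one : 𝒮.iter 1 = 𝒮.T := by
  ext x
  simp [iter]

theorem iter_sub_one (n : ℤ) : 𝒮.iter (n - 1) = 𝒮.iter n ∘ 𝒮.T.symm := by
  ext x
  simp [iter, zpow_sub_one, Equiv.Perm.inv_def]

theorem measurePreserving_iter (n : ℤ) : MeasurePreserving (𝒮.iter n) 𝒮.μ 𝒮.μ := by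
  induction n using Int.induction_on with
  | zero => simpa only [iter_zero] using MeasurePreserving.id 𝒮.μ
  | succ k ih => rw [iter_add, iter_one]; exact ih.comp 𝒮.mp
  | pred k ih => rw [iter_sub_one]; exact ih.comp (𝒮.mp.symm 𝒮.T)

theorem measurable_iter (n : ℤ) : Measurable (𝒮.iter n) :=
  (𝒮.measurePreserving_iter n).measurable

theorem image_iter (n : ℤ) (A : Set 𝒮.X) : 𝒮.iter n '' A = 𝒮.iter (-n) ⁻¹' A := by
  change ⇑((𝒮.T.toEquiv : Equiv.Perm 𝒮.X) ^ n) '' A = ⇑((𝒮.T.toEquiv : Equiv.Perm 𝒮.X) ^ (-n)) ⁻¹' A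
  rw [Equiv.image_eq_preimage_symm, zpow_neg, Equiv.Perm.inv_def]

variable {𝒮}

theorem measurableSet_image_iter {A : Set 𝒮.X} (hA : MeasurableSet A) (n : ℤ) :
    MeasurableSet (𝒮.iter n '' A) := by
  rw [image_iter]
  exact 𝒮.measurable_iter (-n) hA

theorem measure_image_iter {A : Set 𝒮.X} (hA : MeasurableSet A) (n : ℤ) :
    𝒮.μ (𝒮.iter n '' A) = 𝒮.μ A := by
  rw [image_iter]
  exact (𝒮.measurePreserving_iter (-n)).measure_preimage hA.nullMeasurableSet

theorem preimage_iter_ae_eq {A B : Set 𝒮.X} (h : A =ᵐ[𝒮.μ] B) (n : ℤ) :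
    𝒮.iter n ⁻¹' A =ᵐ[𝒮.μ] 𝒮.iter n ⁻¹' B :=
  (𝒮.measurePreserving_iter n).quasiMeasurePreserving.preimage_ae_eq h

variable (𝒮) in
def aePeriods (D : Set 𝒮.X) : AddSubgroup ℤ where
  carrier := {n | 𝒮.iter n ⁻¹' D =ᵐ[𝒮.μ] D}
  zero_mem' := by
    change 𝒮.iter 0 ⁻¹' D =ᵐ[𝒮.μ] D
    rw [iter_zero, preimage_id]
    exact EventuallyEq.rfl
  add_mem' {a b} ha hb := by
    simp only [mem_ofPred_eq, iter_add, preimage_comp] at ha hb ⊢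
    exact (preimage_iter_ae_eq ha b).trans hb
  neg_mem' {a} ha := by
    have h := preimage_iter_ae_eq (EventuallyEq.symm ha) (-a)
    rwa [← preimage_comp, ← iter_add, add_neg_cancel, iter_zero, preimage_id] at h

variable (𝒮) in
def itinerary (D : Set 𝒮.X) (x : 𝒮.X) : ℤ → Prop :=
  fun k => 𝒮.iter k x ∈ D

theorem itinerary_T (D : Set 𝒮.X) (x : 𝒮.X) :
    𝒮.itinerary D (𝒮.T x) = 𝒮.itinerary D x ∘ (· + 1) := by
  ext k
  simp only [itinerary, Function.comp_apply, iter_add, iter_one]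

theorem itinerary_ae_eq_emod {D : Set 𝒮.X} {M : ℤ} (hM : M ∈ aePeriods 𝒮 D) :
    𝒮.itinerary D =ᵐ[𝒮.μ] fun x k => 𝒮.itinerary D x (k % M) := by
  have hk (k : ℤ) : 𝒮.iter k ⁻¹' D =ᵐ[𝒮.μ] 𝒮.iter (k % M) ⁻¹' D := by
    have hq : M * (k / M) ∈ aePeriods 𝒮 D := by
      simpa [mul_comm] using (aePeriods 𝒮 D).zsmul_mem hM (k / M)
    conv_lhs => rw [← Int.mul_ediv_add_emod k M, iter_add, preimage_comp]
    exact preimage_iter_ae_eq hq _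
  filter_upwards [ae_all_iff.2 fun k => (hk k).mem_iff] with x hx
  ext k
  exact hx k

theorem WeakMixing.measure_prod_eq_zero_or_one (hwm : 𝒮.WeakMixing) {W : Set (𝒮.X × 𝒮.X)}
    (hW : MeasurableSet W) (hinv : Prod.map 𝒮.T 𝒮.T ⁻¹' W = W) :
    𝒮.μ.prod 𝒮.μ W = 0 ∨ 𝒮.μ.prod 𝒮.μ W = 1 :=
  hwm W hW (by change 𝒮.μ.prod 𝒮.μ (W ∆ (Prod.map 𝒮.T 𝒮.T ⁻¹' W)) = 0; simp [hinv])

theorem WeakMixing.measure_eq_zero_or_measure_compl_eq_zero_of_mem_aePeriods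
    (hwm : 𝒮.WeakMixing) {D : Set 𝒮.X} (hD : MeasurableSet D) {M : ℤ} (hM0 : M ≠ 0)
    (hM : M ∈ aePeriods 𝒮 D) : 𝒮.μ D = 0 ∨ 𝒮.μ Dᶜ = 0 := by
  set W : Set (𝒮.X × 𝒮.X) := {p | 𝒮.itinerary D p.1 = 𝒮.itinerary D p.2}
  have hW : MeasurableSet W := by
    have : W = ⋂ k, {p | 𝒮.iter k p.1 ∈ D ↔ 𝒮.iter k p.2 ∈ D} := by
      ext; simp [W, itinerary, funext_iff]
    rw [this]
    exact .iInter fun k => .iff (hD.preimage ((𝒮.measurable_iter k).comp measurable_fst))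
      (hD.preimage ((𝒮.measurable_iter k).comp measurable_snd))
  have hinv : Prod.map 𝒮.T 𝒮.T ⁻¹' W = W := by
    ext p
    simp only [W, mem_preimage, mem_ofPred_eq, Prod.map_fst, Prod.map_snd, itinerary_T]
    exact (Equiv.addRight (1 : ℤ)).surjective.injective_comp_right.eq_iff
  have hWpos : 𝒮.μ.prod 𝒮.μ W ≠ 0 := by
    refine measure_prod_setOf_eq_ne_zero (itinerary_ae_eq_emod hM) ?_
    let extend (v : Ico 0 |M| → Prop) (k : ℤ) : Prop :=
      v ⟨k % M, Int.emod_nonneg k hM0, Int.emod_lt_abs k hM0⟩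
    refine (finite_range extend).countable.mono ?_
    rintro _ ⟨x, rfl⟩
    exact ⟨fun r => 𝒮.itinerary D x r, rfl⟩
  have hWc : 𝒮.μ.prod 𝒮.μ Wᶜ = 0 :=
    (prob_compl_eq_zero_iff hW).2 ((hwm.measure_prod_eq_zero_or_one hW hinv).resolve_left hWpos)
  have hDDc : D ×ˢ Dᶜ ⊆ Wᶜ := by
    rintro ⟨x, y⟩ ⟨hx, hy⟩ hxy
    have h0 := congrFun hxy 0
    simp only [itinerary, iter_zero, id] at h0
    exact hy (h0 ▸ hx)
  rw [← mul_eq_zero, ← Measure.prod_prod]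
  exact measure_mono_null hDDc hWc

theorem measure_symmDiff_preimage_T_eq_zero {A : Set 𝒮.X} (hA : 𝒮.μ A = 0) :
    𝒮.μ (A ∆ (𝒮.T ⁻¹' A)) = 0 :=
  measure_mono_null symmDiff_subset_union
    (measure_union_null hA ((𝒮.mp.measure_preimage_equiv A).trans hA))

theorem Nontrivial.exists_measure_ne_zero_measure_compl_ne_zero (hnt : 𝒮.Nontrivial) :
    ∃ D, MeasurableSet D ∧ 𝒮.μ D ≠ 0 ∧ 𝒮.μ Dᶜ ≠ 0 := by
  obtain ⟨D, hD, hpos⟩ := hnt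
  refine ⟨D, hD, fun h => hpos.ne' (measure_symmDiff_preimage_T_eq_zero h), fun h => hpos.ne' ?_⟩
  rw [← compl_symmDiff_compl, ← preimage_compl]
  exact measure_symmDiff_preimage_T_eq_zero h

theorem Nontrivial.exists_measure_symmDiff_image_iter_pos (hnt : 𝒮.Nontrivial) (hwm : 𝒮.WeakMixing)
    {m : ℤ} (hm : m ≠ 0) : ∃ A, MeasurableSet A ∧ 0 < 𝒮.μ (A ∆ (𝒮.iter m '' A)) := by
  obtain ⟨D, hD, hD0, hDc0⟩ := hnt.exists_measure_ne_zero_measure_compl_ne_zero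
  refine ⟨D, hD, pos_iff_ne_zero.2 fun h => ?_⟩
  have hper : -m ∈ aePeriods 𝒮 D := by
    rw [image_iter] at h
    exact (measure_symmDiff_eq_zero_iff.1 h).symm
  rcases hwm.measure_eq_zero_or_measure_compl_eq_zero_of_mem_aePeriods hD (neg_ne_zero.2 hm)
    hper with h | h <;> contradiction

theorem exists_disjoint_image_iter {A : Set 𝒮.X} (hA : MeasurableSet A) {m : ℤ}
    (h : 0 < 𝒮.μ (A ∆ (𝒮.iter m '' A))) :
    ∃ D, MeasurableSet D ∧ 0 < 𝒮.μ D ∧ Disjoint D (𝒮.iter m '' D) := by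
  refine ⟨A \ 𝒮.iter m '' A, hA.diff (measurableSet_image_iter hA m),
    pos_iff_ne_zero.2 fun h0 => h.ne' ?_, disjoint_sdiff_left.mono_right (image_mono sdiff_subset)⟩
  exact measure_symmDiff_eq_zero_iff.2 (ae_eq_of_ae_subset_of_measure_ge (ae_le_set.2 h0)
    (measure_image_iter hA m).le hA.nullMeasurableSet (measure_ne_top _ _))

theorem measure_inter_image_iter_add_le {D : Set 𝒮.X} {m : ℤ} (hD : Disjoint D (𝒮.iter m '' D))
    (s : ℤ) :
    𝒮.μ (D ∩ 𝒮.iter (s + m) '' D) ≤ 𝒮.μ ((𝒮.iter m '' D) ∆ (𝒮.iter s '' (𝒮.iter m '' D))) := by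
  rw [iter_add, image_comp]
  exact measure_mono fun x ⟨hxD, hx⟩ => mem_symmDiff.2 (Or.inr ⟨hx, hD.notMem_of_mem_left hxD⟩)

end MPSystem

/-- **Lemma.** If `S` is a set of rigidity for a nontrivial weak mixing measure preserving
system and `m ≠ 0`, then `S + m` is not a set of strong recurrence for weak mixing systems. -/
theorem rigiditySet_translate_not_strongRecurrenceForWeakMixing
    (S : Set ℤ) (𝒮 : MPSystem) (hnt : 𝒮.Nontrivial) (hwm : 𝒮.WeakMixing)
    (hrig : IsRigiditySetFor S 𝒮) (m : ℤ) (hm : m ≠ 0) :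
    ¬ IsStrongRecurrenceSetForWeakMixing ((fun s => s + m) '' S) := by
  intro hSR
  obtain ⟨A, hA, hApos⟩ := hnt.exists_measure_symmDiff_image_iter_pos hwm hm
  obtain ⟨D, hD, hDpos, hdisj⟩ := MPSystem.exists_disjoint_image_iter hA hApos
  obtain ⟨c, hc, hinf⟩ := hSR 𝒮 hwm D hD hDpos
  refine hinf (((hrig.2 _ (MPSystem.measurableSet_image_iter hD m) c hc).image (· + m)).subset ?_)
  rintro _ ⟨⟨s, hs, rfl⟩, hlt⟩
  exact ⟨s, ⟨hs, hlt.trans_le (MPSystem.measure_inter_image_iter_add_le hdisj s)⟩, rfl⟩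
end

section
/- If A ⊆ ℤ, then for every finite set F ⊆ ℤ there exists t ∈ ℤ such that |(A + t) ∩ F| ≥ d*(A)·|F|, where d*(A) is the upper Banach density of A. -/
open MeasureTheory Filter

/-! Let `m` be the largest value of `|(A + t) ∩ F|`. Counting the pairs `(a, f) ∈ (A ∩ J) × F`,
for a window `J` of length `k`, by their difference `f - a` shows `|A ∩ J| · |F| ≤ (k + L) · m`,
since the difference takes at most `k + L` values when `F` lies in an interval of length `L`.
Dividing by `k · |F|` and letting `k → ∞` gives `d*(A) · |F| ≤ m`. -/

open Finset Pointwise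

theorem Finset.card_mul_card_le_card_sub_mul {G : Type*} [AddGroup G] [DecidableEq G]
    (S F : Finset G) {m : ℕ} (hm : ∀ t : G, #((t +ᵥ S) ∩ F) ≤ m) :
    #S * #F ≤ #(F - S) * m := by
  have hfiber (t : G) : #{p ∈ S ×ˢ F | p.2 - p.1 = t} ≤ m := by
    refine le_trans (card_le_card_of_injOn Prod.snd ?_ ?_) (hm t)
    · rintro ⟨s, f⟩ hp
      simp only [coe_filter, mem_product, Set.mem_ofPred_eq] at hp
      obtain ⟨⟨hs, hf⟩, rfl⟩ := hp
      simpa [mem_vadd_finset] using ⟨⟨s, hs, sub_add_cancel f s⟩, hf⟩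
    · rintro ⟨s, f⟩ hp ⟨s', f'⟩ hp' (rfl : f = f')
      simp only [coe_filter, Set.mem_ofPred_eq] at hp hp'
      simp [sub_right_injective (hp.2.trans hp'.2.symm)]
  calc #S * #F = #(S ×ˢ F) := (card_product S F).symm
    _ = ∑ t ∈ F - S, #{p ∈ S ×ˢ F | p.2 - p.1 = t} :=
      card_eq_sum_card_fiberwise fun p hp => sub_mem_sub (mem_product.1 hp).2 (mem_product.1 hp).1
    _ ≤ ∑ _t ∈ F - S, m := sum_le_sum fun t _ => hfiber t
    _ = #(F - S) * m := by rw [sum_const, smul_eq_mul]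

theorem upperBanachDensity_le_of_ncard_inter_Icc_le (A : Set ℤ) (α β : ℝ)
    (h : ∀ (n : ℤ) (k : ℕ), ((A ∩ Set.Icc (n + 1) (n + k)).ncard : ℝ) ≤ α * k + β) :
    upperBanachDensity A ≤ α := by
  have hbound : ∀ᶠ k : ℕ in atTop,
      ⨆ n : ℤ, ((A ∩ Set.Icc (n + 1) (n + k)).ncard : ℝ) / k ≤ α + β / k := by
    filter_upwards [eventually_gt_atTop 0] with k hk
    have hk : (0 : ℝ) < k := Nat.cast_pos.2 hk
    refine ciSup_le fun n => ?_
    rw [div_le_iff₀ hk, add_mul, div_mul_cancel₀ _ hk.ne']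
    linarith [h n k]
  have hlim : Tendsto (fun k : ℕ => α + β / k) atTop (nhds α) := by
    simpa using tendsto_const_nhds.add (tendsto_const_div_atTop_nhds_zero_nat β)
  calc upperBanachDensity A ≤ limsup (fun k : ℕ => α + β / k) atTop :=
        limsup_le_limsup hbound
          (isCoboundedUnder_le_of_le atTop fun k => Real.iSup_nonneg fun n => by positivity)
          hlim.isBoundedUnder_le
    _ = α := hlim.limsup_eq

theorem exists_ncard_inter_Icc_mul_ncard_le (A F : Set ℤ) (hF : F.Finite) {m : ℕ}
    (hm : ∀ t : ℤ, ((fun a => a + t) '' A ∩ F).ncard ≤ m) :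
    ∃ L : ℕ, ∀ (n : ℤ) (k : ℕ), (A ∩ Set.Icc (n + 1) (n + k)).ncard * F.ncard ≤ (k + L) * m := by
  obtain ⟨a, ha⟩ := hF.bddBelow
  obtain ⟨b, hb⟩ := hF.bddAbove
  refine ⟨(b - a).toNat, fun n k => ?_⟩
  have hS : (A ∩ Set.Icc (n + 1) (n + k)).Finite := (Set.finite_Icc _ _).inter_of_right A
  have htranslate (t : ℤ) : #((t +ᵥ hS.toFinset) ∩ hF.toFinset) ≤ m := by
    refine le_trans ?_ (hm t)
    rw [← Set.ncard_coe_finset]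
    refine Set.ncard_le_ncard ?_ (hF.inter_of_right _)
    intro x
    simp only [coe_inter, coe_vadd_finset, Set.Finite.coe_toFinset]
    rintro ⟨⟨s, ⟨hsA, -⟩, rfl⟩, hxF⟩
    exact ⟨⟨s, hsA, add_comm s t⟩, hxF⟩
  have hdiff : hF.toFinset - hS.toFinset ⊆ Icc (a - (n + k)) (b - (n + 1)) := by
    refine sub_subset_iff.2 fun f hf s hs => ?_
    simp only [Set.Finite.mem_toFinset, Set.mem_inter_iff, Set.mem_Icc] at hf hs
    have := ha hf; have := hb hf
    rw [mem_Icc]; omega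
  have hcard := (card_le_card hdiff).trans_eq (Int.card_Icc _ _)
  rw [Set.ncard_eq_toFinset_card _ hS, Set.ncard_eq_toFinset_card _ hF]
  refine (card_mul_card_le_card_sub_mul _ _ htranslate).trans (Nat.mul_le_mul_right _ ?_)
  omega

/-- **Lemma.** For any `A ⊆ ℤ` and any finite `F ⊆ ℤ`, there is `t ∈ ℤ` with
`|(A + t) ∩ F| ≥ d*(A)·|F|`. -/
theorem exists_translate_dense_in_finite (A : Set ℤ) (F : Set ℤ) (hF : F.Finite) :
    ∃ t : ℤ, upperBanachDensity A * F.ncard ≤ ((((fun a => a + t) '' A) ∩ F).ncard : ℝ) := by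
  set count : ℤ → ℕ := fun t => ((fun a => a + t) '' A ∩ F).ncard
  have hfin : (Set.range count).Finite := (Set.finite_Iic F.ncard).subset <|
    Set.range_subset_iff.2 fun t => Set.ncard_inter_le_ncard_right _ _ hF
  obtain ⟨t₀, ht₀⟩ := (Set.range_nonempty count).csSup_mem hfin
  have hmax (t : ℤ) : count t ≤ count t₀ := ht₀ ▸ le_csSup hfin.bddAbove ⟨t, rfl⟩
  refine ⟨t₀, ?_⟩
  obtain ⟨L, hL⟩ := exists_ncard_inter_Icc_mul_ncard_le A F hF hmax
  rcases F.ncard.eq_zero_or_pos with hF0 | hFpos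
  · simp [hF0]
  have hFpos : (0 : ℝ) < F.ncard := Nat.cast_pos.2 hFpos
  rw [← le_div_iff₀ hFpos]
  refine upperBanachDensity_le_of_ncard_inter_Icc_le A _ (L * count t₀ / F.ncard) fun n k => ?_
  rw [div_mul_eq_mul_div, ← add_div, le_div_iff₀ hFpos]
  exact_mod_cast (hL n k).trans_eq (by ring)
end
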